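/- arXiv:1111.3529 — 2 statements merged into one kernel-verified Lean document; each statement's English description precedes it below -/
import Mathlib

section
/- Let 0 < z₁, z₂ < 1 and let β(s) = 1 + ∑_{ℓ≥1} b_ℓ s^ℓ with b_ℓ ≥ 0 be finite for |s| < 1. Then the infinite product ∏_{x ∈ X} β(z₁^{x₁} z₂^{x₂}) over X = {x ∈ ℤ₊² : gcd(x₁,x₂)=1} is finite; in particular its logarithm is bounded by β(z₁)/(1−z₁) + β(z₂)/((1−z₁)(1−z₂)). -/
/-!
Put `t = z₁ ^ x₁ * z₂ ^ x₂` and `f(s) = β(s) - 1 = ∑ b_ℓ s^ℓ`, so `log β(t) ≤ f(t)`.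
Since `b_ℓ ≥ 0` and every exponent is at least one, `f(r z) ≤ r f(z)` for `0 ≤ r ≤ 1`.
A coprime pair is either `(1, 0)`, contributing `f(z₁)`, or has `x₂ ≥ 1`, and then
`t = (z₁ ^ x₁ * z₂ ^ (x₂ - 1)) z₂` contributes at most `z₁ ^ x₁ * z₂ ^ (x₂ - 1) f(z₂)`.
Summing the geometric series gives `f(z₁) + f(z₂) / ((1 - z₁)(1 - z₂))`.
-/

open Real

theorem tsum_pnat_mul_pow_mul_le {b : ℕ → ℝ} {r z : ℝ} (hb : ∀ ℓ, 0 ≤ b ℓ)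
    (hr₀ : 0 ≤ r) (hr₁ : r ≤ 1) (hz : 0 ≤ z)
    (hs : Summable fun ℓ : ℕ+ => b ℓ * z ^ (ℓ : ℕ)) :
    ∑' ℓ : ℕ+, b ℓ * (r * z) ^ (ℓ : ℕ) ≤ r * ∑' ℓ : ℕ+, b ℓ * z ^ (ℓ : ℕ) := by
  have hterm : ∀ ℓ : ℕ+, b ℓ * (r * z) ^ (ℓ : ℕ) ≤ r * (b ℓ * z ^ (ℓ : ℕ)) := fun ℓ => by
    have hrℓ : r ^ (ℓ : ℕ) ≤ r := pow_le_of_le_one hr₀ hr₁ ℓ.ne_zero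
    calc b ℓ * (r * z) ^ (ℓ : ℕ) = b ℓ * z ^ (ℓ : ℕ) * r ^ (ℓ : ℕ) := by ring
      _ ≤ b ℓ * z ^ (ℓ : ℕ) * r := by gcongr; exact mul_nonneg (hb ℓ) (by positivity)
      _ = r * (b ℓ * z ^ (ℓ : ℕ)) := by ring
  rw [← tsum_mul_left]
  refine Summable.tsum_le_tsum hterm ?_ (hs.mul_left r)
  exact (hs.mul_left r).of_nonneg_of_le (fun ℓ => mul_nonneg (hb ℓ) (by positivity)) hterm

theorem log_one_add_tsum_pnat_mul_pow_le {b : ℕ → ℝ} {r z : ℝ} (hb : ∀ ℓ, 0 ≤ b ℓ)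
    (hr₀ : 0 ≤ r) (hr₁ : r ≤ 1) (hz : 0 ≤ z)
    (hs : Summable fun ℓ : ℕ+ => b ℓ * z ^ (ℓ : ℕ)) :
    log (1 + ∑' ℓ : ℕ+, b ℓ * (r * z) ^ (ℓ : ℕ)) ≤ r * ∑' ℓ : ℕ+, b ℓ * z ^ (ℓ : ℕ) := by
  have hnonneg : 0 ≤ ∑' ℓ : ℕ+, b ℓ * (r * z) ^ (ℓ : ℕ) :=
    tsum_nonneg fun ℓ => mul_nonneg (hb ℓ) (by positivity)
  calc _ ≤ (1 + ∑' ℓ : ℕ+, b ℓ * (r * z) ^ (ℓ : ℕ)) - 1 := log_le_sub_one_of_pos (by linarith)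
    _ = ∑' ℓ : ℕ+, b ℓ * (r * z) ^ (ℓ : ℕ) := add_sub_cancel_left _ _
    _ ≤ _ := tsum_pnat_mul_pow_mul_le hb hr₀ hr₁ hz hs

theorem coprime_pairs_summable_and_tsum_le (f : ℕ × ℕ → ℝ) (hf : ∀ p, 0 ≤ f p)
    (hs : Summable fun p : ℕ × ℕ => f (p.1, p.2 + 1)) :
    Summable (fun x : {x : ℕ × ℕ // Nat.gcd x.1 x.2 = 1} => f x) ∧
      ∑' x : {x : ℕ × ℕ // Nat.gcd x.1 x.2 = 1}, f x ≤
        f (1, 0) + ∑' p : ℕ × ℕ, f (p.1, p.2 + 1) := by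
  set d : Unit ⊕ ℕ × ℕ → ℕ × ℕ := Sum.elim (fun _ => (1, 0)) fun p => (p.1, p.2 + 1)
  have hg : HasSum (f ∘ d) (f (1, 0) + ∑' p : ℕ × ℕ, f (p.1, p.2 + 1)) :=
    (hasSum_unique (f ∘ d ∘ Sum.inl)).sum hs.hasSum
  set e : {x : ℕ × ℕ // Nat.gcd x.1 x.2 = 1} → Unit ⊕ ℕ × ℕ :=
    fun x => if x.1.2 = 0 then .inl () else .inr (x.1.1, x.1.2 - 1)
  -- `gcd a 0 = a`, so `(1, 0)` is the only coprime pair with vanishing second entry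
  have hde : ∀ x, d (e x) = x.1 := by
    rintro ⟨⟨a, _ | c⟩, hx⟩
    · obtain rfl : a = 1 := by simpa using hx
      rfl
    · simp [d, e]
  have he : Function.Injective e := fun x y h =>
    Subtype.val_injective ((hde x).symm.trans ((congrArg d h).trans (hde y)))
  have hfe : ∀ x : {x : ℕ × ℕ // Nat.gcd x.1 x.2 = 1}, f x = (f ∘ d) (e x) := fun x => by
    rw [Function.comp_apply, hde]
  refine ⟨(hg.summable.comp_injective he).congr fun x => (hfe x).symm, ?_⟩
  rw [tsum_congr hfe, ← hg.tsum_eq]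
  exact tsum_comp_le_tsum_of_inj hg.summable (fun i => hf (d i)) he

theorem hasSum_pow_mul_pow {r s : ℝ} (hr₀ : 0 ≤ r) (hr₁ : r < 1) (hs₀ : 0 ≤ s) (hs₁ : s < 1) :
    HasSum (fun p : ℕ × ℕ => r ^ p.1 * s ^ p.2) ((1 - r) * (1 - s))⁻¹ := by
  have hr := hasSum_geometric_of_lt_one hr₀ hr₁
  have hs := hasSum_geometric_of_lt_one hs₀ hs₁
  rw [mul_inv]
  exact hr.mul hs (hr.summable.mul_of_nonneg hs.summable (fun _ => by positivity)
    fun _ => by positivity)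

theorem stmt_6 (z₁ z₂ : ℝ) (hz₁ : 0 < z₁) (hz₁' : z₁ < 1)
    (hz₂ : 0 < z₂) (hz₂' : z₂ < 1)
    (b : ℕ → ℝ) (hb : ∀ ℓ, 0 ≤ b ℓ)
    (hβ : ∀ s : ℝ, |s| < 1 → Summable (fun ℓ : ℕ+ => b ℓ * s ^ (ℓ : ℕ)))
    (β : ℝ → ℝ) (hβdef : ∀ s : ℝ, β s = 1 + ∑' ℓ : ℕ+, b ℓ * s ^ (ℓ : ℕ)) :
    Multipliable (fun x : {x : ℕ × ℕ // Nat.gcd x.1 x.2 = 1} =>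
      β (z₁ ^ x.1.1 * z₂ ^ x.1.2)) ∧
    ∑' x : {x : ℕ × ℕ // Nat.gcd x.1 x.2 = 1},
        Real.log (β (z₁ ^ x.1.1 * z₂ ^ x.1.2)) ≤
      β z₁ / (1 - z₁) + β z₂ / ((1 - z₁) * (1 - z₂)) := by
  have hβ_one : ∀ s, 0 ≤ s → 1 ≤ β s := fun s hs => by
    have : 0 ≤ ∑' ℓ : ℕ+, b ℓ * s ^ (ℓ : ℕ) :=
      tsum_nonneg fun ℓ => mul_nonneg (hb ℓ) (by positivity)
    linarith [hβdef s]
  have hlog_nonneg : ∀ p : ℕ × ℕ, 0 ≤ log (β (z₁ ^ p.1 * z₂ ^ p.2)) :=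
    fun p => log_nonneg (hβ_one _ (by positivity))
  have hdom : ∀ p : ℕ × ℕ, log (β (z₁ ^ p.1 * z₂ ^ (p.2 + 1))) ≤
      (β z₂ - 1) * (z₁ ^ p.1 * z₂ ^ p.2) := fun p => by
    rw [hβdef, hβdef z₂, pow_succ, ← mul_assoc, add_sub_cancel_left]
    exact (log_one_add_tsum_pnat_mul_pow_le hb (by positivity)
      (mul_le_one₀ (pow_le_one₀ hz₁.le hz₁'.le) (by positivity) (pow_le_one₀ hz₂.le hz₂'.le))
      hz₂.le (hβ z₂ (by rwa [abs_of_pos hz₂]))).trans_eq (mul_comm _ _)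
  have hgeom := (hasSum_pow_mul_pow hz₁.le hz₁' hz₂.le hz₂').mul_left (β z₂ - 1)
  rw [← div_eq_mul_inv] at hgeom
  have htail := hgeom.summable.of_nonneg_of_le (fun p => hlog_nonneg (p.1, p.2 + 1)) hdom
  obtain ⟨hsum, hle⟩ := coprime_pairs_summable_and_tsum_le _ hlog_nonneg htail
  refine ⟨multipliable_of_summable_log (fun x => one_pos.trans_le (hβ_one _ (by positivity)))
    hsum, ?_⟩
  have hd₁ : 0 < 1 - z₁ := sub_pos.2 hz₁'
  calc _ ≤ _ := hle
    _ ≤ (β z₁ - 1) + (β z₂ - 1) / ((1 - z₁) * (1 - z₂)) :=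
        add_le_add (by simpa using log_le_sub_one_of_pos (one_pos.trans_le (hβ_one z₁ hz₁.le)))
          (hasSum_le hdom htail.hasSum hgeom)
    _ ≤ _ := by
        gcongr ?_ + ?_
        · exact (sub_le_self _ zero_le_one).trans
            (le_div_self (by linarith [hβ_one z₁ hz₁.le]) hd₁ (by linarith))
        · gcongr
          linarith
end

section
/- Let r ∈ ℕ, 0 < ρ ≤ 1, and β(s) = (1 + ρs)^r. Then for every θ ∈ (0,1) and all t ∈ ℝ, (1/2) ln( β(θ e^{it}) β(θ e^{−it}) / β(θ)² ) ≤ − rρ θ (1 − cos t) / (1 + ρ)². Equivalently, (r/2) ln( (1 + 2ρθ cos t + ρ²θ²)/(1 + ρθ)² ) ≤ − rρθ(1 − cos t)/(1+ρ)². -/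
theorem stmt_14 (r : ℕ) (hr : 1 ≤ r) (ρ : ℝ) (hρ : 0 < ρ) (hρ' : ρ ≤ 1)
    (θ : ℝ) (hθ : 0 < θ) (hθ' : θ < 1) (t : ℝ) :
    (r / 2 : ℝ) *
        Real.log ((1 + 2 * ρ * θ * Real.cos t + ρ ^ 2 * θ ^ 2) / (1 + ρ * θ) ^ 2) ≤
      -(r * ρ * θ * (1 - Real.cos t)) / (1 + ρ) ^ 2 := by
  set c := Real.cos t with hc
  have hc1 : -1 ≤ c := Real.neg_one_le_cos t
  have hc2 : c ≤ 1 := Real.cos_le_one t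
  have hu : 0 < ρ * θ := mul_pos hρ hθ
  have hu1 : ρ * θ < 1 := by nlinarith
  have hA : 0 < 1 + 2 * ρ * θ * c + ρ ^ 2 * θ ^ 2 := by nlinarith
  have hD : (0:ℝ) < (1 + ρ * θ) ^ 2 := by positivity
  have hE : (0:ℝ) < (1 + ρ) ^ 2 := by positivity
  have hr' : (1:ℝ) ≤ (r:ℝ) := by exact_mod_cast hr
  have hlog : Real.log ((1 + 2 * ρ * θ * c + ρ ^ 2 * θ ^ 2) / (1 + ρ * θ) ^ 2)
      ≤ (1 + 2 * ρ * θ * c + ρ ^ 2 * θ ^ 2) / (1 + ρ * θ) ^ 2 - 1 :=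
    Real.log_le_sub_one_of_pos (div_pos hA hD)
  have h1 : (1 + 2 * ρ * θ * c + ρ ^ 2 * θ ^ 2) / (1 + ρ * θ) ^ 2 - 1
      = -(2 * ρ * θ * (1 - c)) / (1 + ρ * θ) ^ 2 := by
    field_simp
    ring
  have h2 : -(2 * ρ * θ * (1 - c)) / (1 + ρ * θ) ^ 2
      ≤ -(2 * ρ * θ * (1 - c)) / (1 + ρ) ^ 2 := by
    have hk : 0 ≤ 2 * ρ * θ * (1 - c) := by nlinarith
    have hDE : (1 + ρ * θ) ^ 2 ≤ (1 + ρ) ^ 2 := by nlinarith [mul_le_mul_of_nonneg_left hθ'.le hρ.le]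
    rw [div_le_div_iff₀ hD hE]
    nlinarith [mul_le_mul_of_nonneg_left hDE hk]
  have hlog2 : Real.log ((1 + 2 * ρ * θ * c + ρ ^ 2 * θ ^ 2) / (1 + ρ * θ) ^ 2)
      ≤ -(2 * ρ * θ * (1 - c)) / (1 + ρ) ^ 2 := by linarith [h1 ▸ hlog]
  have hr0 : (0:ℝ) ≤ (r:ℝ) / 2 := by positivity
  calc (r / 2 : ℝ) * Real.log ((1 + 2 * ρ * θ * c + ρ ^ 2 * θ ^ 2) / (1 + ρ * θ) ^ 2)
      ≤ (r / 2 : ℝ) * (-(2 * ρ * θ * (1 - c)) / (1 + ρ) ^ 2) :=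
        mul_le_mul_of_nonneg_left hlog2 hr0
    _ = -(r * ρ * θ * (1 - c)) / (1 + ρ) ^ 2 := by ring
end
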